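/- Let t0 < T, θ ∈ (0,1), 0 < μ < 1, γ > 0, b > 0, and let η : [t0,T] → ℝ be continuous. Then the function t ↦ (I^{θ,μ,γ}η)(t) is well defined (the series converges for every t ∈ [t0,T]), is continuous on [t0,T], and satisfies (I^{θ,μ,γ}η)(t0) = 0. Consequently, any continuous solution of x(t) = x0 + (I^{θ,μ,γ}(f(·,x(·))))(t) automatically satisfies the initial condition x(t0) = x0 when μ ≠ 1. -/

import Mathlib

open Real MeasureTheory Set

/-- Generalized binomial coefficient `C(γ, i) = γ(γ-1)⋯(γ-i+1)/i!`. -/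
noncomputable def genBinom (γ : ℝ) (i : ℕ) : ℝ :=
  (∏ j ∈ Finset.range i, (γ - j)) / (Nat.factorial i : ℝ)

/-- Rising factorial `(ρ)_k = ρ(ρ+1)⋯(ρ+k-1)`. -/
noncomputable def risingFac (ρ : ℝ) (k : ℕ) : ℝ :=
  ∏ j ∈ Finset.range k, (ρ + j)

/-- Generalized Mittag-Leffler function `E_{θ,β}^ρ(λ, z)`
(terms with `Γ` at a pole vanish since `Real.Gamma` is `0` there). -/
noncomputable def mittagLeffler (θ β ρ lam z : ℝ) : ℝ :=
  ∑' k : ℕ, lam ^ k * z ^ ((k : ℝ) * θ + β - 1) * risingFac ρ k /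
    (Real.Gamma ((k : ℝ) * θ + β) * (Nat.factorial k : ℝ))

/-- Generalized AB fractional integral `(I^{θ,μ,γ} η)(t)` starting at `t0`,
with normalization constant `b = B(θ) > 0`. -/
noncomputable def ABIntegral (t0 b θ μ γ : ℝ) (η : ℝ → ℝ) (t : ℝ) : ℝ :=
  ∑' i : ℕ, genBinom γ i * θ ^ i /
      (b * (1 - θ) ^ ((i : ℝ) - 1) * Real.Gamma ((i : ℝ) * θ + 1 - μ)) *
    ∫ s in t0..t, (t - s) ^ ((i : ℝ) * θ - μ) * η s

/-- Generalized ABC fractional derivative `(D^{θ,μ,γ} f)(t)` starting at `t0`,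
with `λ = -θ/(1-θ)` and normalization constant `b = B(θ) > 0`. -/
noncomputable def ABCDeriv (t0 b θ μ γ : ℝ) (f : ℝ → ℝ) (t : ℝ) : ℝ :=
  (b / (1 - θ)) * ∫ s in t0..t, mittagLeffler θ μ γ (-θ / (1 - θ)) (t - s) * deriv f s

/-- Generalized ABR fractional derivative `(R^{θ,μ,γ} f)(t)` starting at `t0`. -/
noncomputable def ABRDeriv (t0 b θ μ γ : ℝ) (f : ℝ → ℝ) (t : ℝ) : ℝ :=
  (b / (1 - θ)) *
    deriv (fun u => ∫ s in t0..u, mittagLeffler θ μ γ (-θ / (1 - θ)) (u - s) * f s) t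

/-- The contraction constant `C1(T, A)` (case `μ ≠ 1`). -/
noncomputable def C1const (t0 T b θ μ γ A : ℝ) : ℝ :=
  (A / b) * ∑' i : ℕ, |genBinom γ i| * θ ^ i * (T - t0) ^ ((i : ℝ) * θ + 1 - μ) /
    ((1 - θ) ^ ((i : ℝ) - 1) * Real.Gamma ((i : ℝ) * θ + 2 - μ))

/-- The contraction constant `C2(T, A)` (case `μ = 1`). -/
noncomputable def C2const (t0 T b θ γ A : ℝ) : ℝ :=
  (A / b) * ((1 - θ) +
    ∑' i : ℕ, |genBinom γ (i + 1)| * θ ^ (i + 1) * (T - t0) ^ (((i : ℝ) + 1) * θ) /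
      ((1 - θ) ^ (i : ℕ) * Real.Gamma (((i : ℝ) + 1) * θ + 1)))

/-- The operator `Υ` in the case `μ = 1`, whose `i = 0` term reduces to `((1-θ)/b) f(t, x(t))`. -/
noncomputable def UpsilonMuOne (t0 b θ γ x0 : ℝ) (f : ℝ → ℝ → ℝ) (x : ℝ → ℝ) (t : ℝ) : ℝ :=
  x0 + ((1 - θ) / b) * f t (x t) +
    ∑' i : ℕ, genBinom γ (i + 1) * θ ^ (i + 1) /
        (b * (1 - θ) ^ (i : ℕ) * Real.Gamma (((i : ℝ) + 1) * θ)) *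
      ∫ s in t0..t, (t - s) ^ (((i : ℝ) + 1) * θ - 1) * f s (x s)

/-!
Each term of the series is bounded on `[t0, T]`, uniformly in `t`, by `C rⁱ / Γ(iθ + 2 - μ)` with
`r = (1 + |γ|) θ (T - t0)^θ / (1 - θ)`: the coefficient grows at most geometrically because
`|C(γ, i)| ≤ (1 + |γ|)ⁱ`, while for `M = sup |η|`
`|∫_{t0}^t (t - s)^(iθ-μ) η(s) ds| ≤ M (T - t0)^(iθ+1-μ) / (iθ+1-μ)`
and `(iθ + 1 - μ) Γ(iθ + 1 - μ) = Γ(iθ + 2 - μ)`. Since `Γ(iθ + δ) ≥ c ⌊iθ⌋!` for `δ ≥ 1`, these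
majorants are summable, and the Weierstrass M-test gives convergence and continuity once each term
is continuous. For a single term, the substitution `s = t0 + (t - t0) v` moves the singularity of
the kernel to the fixed point `v = 1`, after which dominated convergence applies. All integrals
vanish at `t = t0`.
-/

open Filter Topology intervalIntegral
open scoped Nat

lemma exists_pos_mul_factorial_le_Gamma :
    ∃ c > 0, ∀ (n : ℕ) (x : ℝ), n + 1 ≤ x → c * n ! ≤ Gamma x := by
  obtain ⟨x₀, hx₀, hmin⟩ := exists_isMinOn_Gamma_Ioi
  have hc : 0 < Gamma x₀ := Gamma_pos_of_pos (by linarith [hx₀.1])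
  refine ⟨Gamma x₀, hc, fun n => ?_⟩
  induction n with
  | zero => exact fun x hx => by simpa using hmin (show x ∈ Ioi 0 by simp at hx ⊢; linarith)
  | succ n ih =>
    intro x hx
    push_cast at hx
    have hGamma : Gamma x₀ * n ! ≤ Gamma (x - 1) := ih (x - 1) (by linarith)
    rw [show x = (x - 1) + 1 by ring, Gamma_add_one (by linarith), Nat.factorial_succ]
    push_cast
    calc Gamma x₀ * ((n + 1) * n !) = (n + 1) * (Gamma x₀ * n !) := by ring
      _ ≤ (x - 1) * Gamma (x - 1) := by gcongr <;> linarith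

lemma tendsto_pow_div_Gamma_mul_add {θ δ : ℝ} (K : ℝ) (hθ : 0 < θ) (hδ : 1 ≤ δ) :
    Tendsto (fun i : ℕ => K ^ i / Gamma (i * θ + δ)) atTop (𝓝 0) := by
  obtain ⟨c, hc, hcGamma⟩ := exists_pos_mul_factorial_le_Gamma
  set L := max 1 (|K| ^ θ⁻¹)
  have hfloor : Tendsto (fun i : ℕ => ⌊(i : ℝ) * θ⌋₊) atTop atTop :=
    tendsto_nat_floor_atTop.comp (tendsto_natCast_atTop_atTop.atTop_mul_const hθ)
  have hfac : Tendsto (fun n : ℕ => L / c * (L ^ n / n !)) atTop (𝓝 0) := by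
    simpa using (FloorSemiring.tendsto_pow_div_factorial_atTop L).const_mul (L / c)
  refine squeeze_zero_norm (fun i => ?_) (hfac.comp hfloor)
  set n := ⌊(i : ℝ) * θ⌋₊
  have hiθ : 0 ≤ (i : ℝ) * θ := by positivity
  have hpow : |K| ^ i ≤ L ^ (n + 1) := calc
    |K| ^ i = (|K| ^ θ⁻¹) ^ ((i : ℝ) * θ) := by
      rw [← rpow_mul (abs_nonneg K), mul_comm (i : ℝ), inv_mul_cancel_left₀ hθ.ne', rpow_natCast]
    _ ≤ L ^ ((i : ℝ) * θ) := by gcongr; exact le_max_right _ _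
    _ ≤ L ^ ((n + 1 : ℕ) : ℝ) := by
      gcongr
      · exact le_max_left _ _
      · push_cast; exact (Nat.lt_floor_add_one _).le
    _ = L ^ (n + 1) := rpow_natCast _ _
  have hGamma : c * n ! ≤ Gamma (i * θ + δ) := hcGamma n _ (by linarith [Nat.floor_le hiθ])
  rw [norm_div, norm_pow, Real.norm_eq_abs,
    Real.norm_of_nonneg (Gamma_pos_of_pos (by linarith)).le]
  calc |K| ^ i / Gamma (i * θ + δ) ≤ L ^ (n + 1) / (c * n !) := by gcongr
    _ = L / c * (L ^ n / n !) := by rw [pow_succ]; field_simp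

lemma summable_pow_div_Gamma_mul_add {θ δ : ℝ} (R : ℝ) (hθ : 0 < θ) (hδ : 1 ≤ δ) :
    Summable (fun i : ℕ => R ^ i / Gamma (i * θ + δ)) := by
  have hsmall : ∀ᶠ i : ℕ in atTop, ‖(2 * R) ^ i / Gamma (i * θ + δ)‖ ≤ 1 :=
    (tendsto_pow_div_Gamma_mul_add (2 * R) hθ hδ).norm.eventually (eventually_le_nhds (by norm_num))
  refine summable_geometric_two.of_norm_bounded_eventually_nat ?_
  filter_upwards [hsmall] with i hi
  calc ‖R ^ i / Gamma (i * θ + δ)‖ = (1 / 2) ^ i * ‖(2 * R) ^ i / Gamma (i * θ + δ)‖ := by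
        rw [mul_pow, mul_div_assoc, norm_mul, norm_pow, Real.norm_of_nonneg zero_le_two,
          ← mul_assoc, ← mul_pow]; norm_num
    _ ≤ (1 / 2) ^ i := mul_le_of_le_one_right (by positivity) hi

lemma continuous_intervalIntegral_mul_of_bounded {X : Type*} [TopologicalSpace X]
    [FirstCountableTopology X] {a b M : ℝ} {w : ℝ → ℝ} {h : X → ℝ → ℝ}
    (hw : IntervalIntegrable w volume a b) (hx : ∀ v, Continuous fun x => h x v)
    (hv : ∀ x, Continuous (h x)) (hM : ∀ x v, ‖h x v‖ ≤ M) :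
    Continuous fun x => ∫ v in a..b, w v * h x v := by
  refine continuous_of_dominated_interval (bound := fun v => ‖w v‖ * M)
    (fun x => hw.def'.aestronglyMeasurable.mul (hv x).aestronglyMeasurable)
    (fun x => ae_of_all _ fun v _ => ?_) (hw.norm.mul_const M)
    (ae_of_all _ fun v _ => continuous_const.mul (hx v))
  rw [norm_mul]
  exact mul_le_mul_of_nonneg_left (hM x v) (norm_nonneg _)

lemma intervalIntegrable_sub_rpow {α : ℝ} (hα : -1 < α) (t0 t : ℝ) :
    IntervalIntegrable (fun s => (t - s) ^ α) volume t0 t := by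
  simpa using (intervalIntegrable_rpow' hα (a := t - t0) (b := 0)).comp_sub_left t

lemma integral_sub_rpow {α : ℝ} (hα : -1 < α) (t0 t : ℝ) :
    ∫ s in t0..t, (t - s) ^ α = (t - t0) ^ (α + 1) / (α + 1) := by
  rw [integral_comp_sub_left (fun u => u ^ α), sub_self, integral_rpow (Or.inl hα),
    zero_rpow (by linarith), sub_zero]

lemma norm_integral_sub_rpow_mul_le {α M t0 t : ℝ} {g : ℝ → ℝ} (hα : -1 < α) (ht : t0 ≤ t)
    (hM : ∀ s ∈ Ioc t0 t, ‖g s‖ ≤ M) :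
    ‖∫ s in t0..t, (t - s) ^ α * g s‖ ≤ M * (t - t0) ^ (α + 1) / (α + 1) := calc
  ‖∫ s in t0..t, (t - s) ^ α * g s‖ ≤ ∫ s in t0..t, (t - s) ^ α * M := by
    refine norm_integral_le_of_norm_le ht (ae_of_all _ fun s hs => ?_)
      ((intervalIntegrable_sub_rpow hα t0 t).mul_const M)
    have hts : 0 ≤ (t - s) ^ α := rpow_nonneg (by linarith [hs.2]) α
    rw [norm_mul, Real.norm_of_nonneg hts]
    exact mul_le_mul_of_nonneg_left (hM s hs) hts
  _ = M * (t - t0) ^ (α + 1) / (α + 1) := by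
    rw [intervalIntegral.integral_mul_const, integral_sub_rpow hα]; ring

lemma integral_sub_rpow_mul_eq {α t0 t : ℝ} (g : ℝ → ℝ) (hα : -1 < α) (ht : t0 ≤ t) :
    ∫ s in t0..t, (t - s) ^ α * g s =
      (t - t0) ^ (α + 1) * ∫ v in (0 : ℝ)..1, (1 - v) ^ α * g ((t - t0) * v + t0) := by
  have hsub := smul_integral_comp_mul_add (a := 0) (b := 1) (fun s => (t - s) ^ α * g s)
    (t - t0) t0
  simp only [mul_zero, zero_add, mul_one, sub_add_cancel, smul_eq_mul] at hsub
  rw [← hsub, rpow_add_one' (by linarith) (by linarith), mul_comm _ (t - t0), mul_assoc,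
    ← intervalIntegral.integral_const_mul ((t - t0) ^ α)]
  congr 1
  refine integral_congr fun v hv => ?_
  rw [uIcc_of_le zero_le_one] at hv
  rw [show t - ((t - t0) * v + t0) = (t - t0) * (1 - v) by ring,
    mul_rpow (by linarith) (by linarith [hv.2]), mul_assoc]

lemma continuousOn_integral_sub_rpow_mul {α t0 T : ℝ} {g : ℝ → ℝ} (hα : -1 < α)
    (hg : ContinuousOn g (Icc t0 T)) :
    ContinuousOn (fun t => ∫ s in t0..t, (t - s) ^ α * g s) (Icc t0 T) := by
  rcases lt_or_ge T t0 with hT | hT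
  · simp [Icc_eq_empty_of_lt hT]
  obtain ⟨M, hM⟩ := isCompact_Icc.exists_bound_of_continuousOn hg
  set G := IccExtend hT ((Icc t0 T).domRestrict g)
  have hG : Continuous G := continuous_IccExtend_iff.2 hg.domRestrict
  have hGM : ∀ x, ‖G x‖ ≤ M := fun x => hM _ (projIcc t0 T hT x).2
  have hGg : EqOn G g (Icc t0 T) := fun x hx => IccExtend_of_mem hT _ hx
  have hscaled : Continuous fun t =>
      (t - t0) ^ (α + 1) * ∫ v in (0 : ℝ)..1, (1 - v) ^ α * G ((t - t0) * v + t0) :=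
    ((continuous_sub_right t0).rpow_const fun _ => Or.inr (by linarith)).mul <|
      continuous_intervalIntegral_mul_of_bounded
        (intervalIntegrable_sub_rpow hα 0 1) (fun v => hG.comp (by fun_prop))
        (fun t => hG.comp (by fun_prop)) fun _ _ => hGM _
  refine hscaled.continuousOn.congr fun t ht =>
    (integral_congr fun s hs => ?_).trans (integral_sub_rpow_mul_eq G hα ht.1)
  rw [uIcc_of_le ht.1] at hs
  simp only [hGg ⟨hs.1, hs.2.trans ht.2⟩]

lemma abs_genBinom_le (γ : ℝ) (i : ℕ) : |genBinom γ i| ≤ (1 + |γ|) ^ i := by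
  rw [genBinom, abs_div, Finset.abs_prod, Nat.abs_cast,
    div_le_iff₀ (by positivity : (0 : ℝ) < i !)]
  calc ∏ j ∈ Finset.range i, |γ - j| ≤ ∏ j ∈ Finset.range i, (1 + |γ|) * (j + 1 : ℝ) := by
        refine Finset.prod_le_prod (fun _ _ => abs_nonneg _) fun j _ => (abs_sub γ j).trans ?_
        rw [Nat.abs_cast]
        nlinarith [abs_nonneg γ, j.cast_nonneg (α := ℝ)]
    _ = (1 + |γ|) ^ i * i ! := by
        rw [Finset.prod_mul_distrib, Finset.prod_const, Finset.card_range,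
          ← Finset.prod_range_add_one_eq_factorial]
        push_cast; rfl

noncomputable def abCoeff (b θ μ γ : ℝ) (i : ℕ) : ℝ :=
  genBinom γ i * θ ^ i / (b * (1 - θ) ^ ((i : ℝ) - 1) * Gamma (i * θ + 1 - μ))

lemma ABIntegral_self (t0 b θ μ γ : ℝ) (η : ℝ → ℝ) : ABIntegral t0 b θ μ γ η t0 = 0 := by
  simp [ABIntegral]

lemma norm_abCoeff_mul_integral_le {t0 T t b θ μ γ M : ℝ} {η : ℝ → ℝ} (hθ0 : 0 < θ)
    (hθ1 : θ < 1) (hμ : μ < 1) (hM : ∀ s ∈ Icc t0 T, ‖η s‖ ≤ M) (ht : t ∈ Icc t0 T) (i : ℕ) :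
    ‖abCoeff b θ μ γ i * ∫ s in t0..t, (t - s) ^ ((i : ℝ) * θ - μ) * η s‖ ≤
      (1 - θ) * M * (T - t0) ^ (1 - μ) / |b| *
        (((1 + |γ|) * θ * (T - t0) ^ θ / (1 - θ)) ^ i / Gamma (i * θ + (2 - μ))) := by
  rcases eq_or_ne b 0 with rfl | hb
  · simp [abCoeff]
  have hiθ : 0 ≤ (i : ℝ) * θ := by positivity
  have hα : -1 < (i : ℝ) * θ - μ := by linarith
  have hΓ : 0 < Gamma (i * θ + 1 - μ) := Gamma_pos_of_pos (by linarith)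
  have hM0 : 0 ≤ M := (norm_nonneg _).trans (hM t0 ⟨le_rfl, ht.1.trans ht.2⟩)
  have hcoeff : ‖abCoeff b θ μ γ i‖ ≤
      (1 + |γ|) ^ i * θ ^ i / (|b| * (1 - θ) ^ ((i : ℝ) - 1) * Gamma (i * θ + 1 - μ)) := by
    rw [abCoeff, Real.norm_eq_abs, abs_div, abs_mul, abs_mul, abs_mul, abs_pow, abs_of_pos hθ0,
      abs_of_pos (rpow_pos_of_pos (by linarith) _), abs_of_pos hΓ]
    gcongr
    exact abs_genBinom_le γ i
  have hint : ‖∫ s in t0..t, (t - s) ^ ((i : ℝ) * θ - μ) * η s‖ ≤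
      M * (T - t0) ^ ((i : ℝ) * θ - μ + 1) / ((i : ℝ) * θ - μ + 1) :=
    (norm_integral_sub_rpow_mul_le hα ht.1 fun s hs => hM s ⟨hs.1.le, hs.2.trans ht.2⟩).trans
      (by gcongr <;> linarith [ht.1, ht.2])
  refine (norm_mul_le _ _).trans ((mul_le_mul hcoeff hint (norm_nonneg _) (by positivity)).trans
    (le_of_eq ?_))
  rw [show (i : ℝ) * θ + (2 - μ) = (i * θ + 1 - μ) + 1 by ring, Gamma_add_one (by linarith),
    rpow_sub_one (by linarith), rpow_natCast,
    show (i : ℝ) * θ - μ + 1 = θ * i + (1 - μ) by ring,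
    rpow_add' (by linarith [ht.1, ht.2]) (by linarith), rpow_mul (by linarith [ht.1, ht.2]),
    rpow_natCast, div_pow, mul_pow, mul_pow]
  have h1θ : 1 - θ ≠ 0 := by linarith
  have hα1 : (i : ℝ) * θ + 1 - μ ≠ 0 := by linarith
  field_simp
  ring

theorem ab_integral_well_defined_general
    (t0 T θ μ γ b : ℝ) (htT : t0 < T) (hθ0 : 0 < θ) (hθ1 : θ < 1)
    (hμ1 : μ < 1)
    (η : ℝ → ℝ) (hη : ContinuousOn η (Set.Icc t0 T)) :
    (∀ t ∈ Set.Icc t0 T, Summable (fun i : ℕ =>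
      genBinom γ i * θ ^ i /
          (b * (1 - θ) ^ ((i : ℝ) - 1) * Real.Gamma ((i : ℝ) * θ + 1 - μ)) *
        ∫ s in t0..t, (t - s) ^ ((i : ℝ) * θ - μ) * η s)) ∧
    ContinuousOn (fun t => ABIntegral t0 b θ μ γ η t) (Set.Icc t0 T) ∧
    ABIntegral t0 b θ μ γ η t0 = 0 ∧
    (∀ (f : ℝ → ℝ → ℝ) (x : ℝ → ℝ) (x0 : ℝ), ContinuousOn x (Set.Icc t0 T) →
      (∀ t ∈ Set.Icc t0 T, x t = x0 + ABIntegral t0 b θ μ γ (fun s => f s (x s)) t) →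
      x t0 = x0) := by
  obtain ⟨M, hM⟩ := isCompact_Icc.exists_bound_of_continuousOn hη
  have hbound (i : ℕ) (t : ℝ) (ht : t ∈ Icc t0 T) :=
    norm_abCoeff_mul_integral_le (b := b) (γ := γ) hθ0 hθ1 hμ1 hM ht i
  have hsum := (summable_pow_div_Gamma_mul_add ((1 + |γ|) * θ * (T - t0) ^ θ / (1 - θ)) hθ0
    (by linarith : 1 ≤ 2 - μ)).mul_left ((1 - θ) * M * (T - t0) ^ (1 - μ) / |b|)
  have hterm (i : ℕ) : ContinuousOn
      (fun t => abCoeff b θ μ γ i * ∫ s in t0..t, (t - s) ^ ((i : ℝ) * θ - μ) * η s) (Icc t0 T) :=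
    continuousOn_const.mul <|
      continuousOn_integral_sub_rpow_mul (by nlinarith [i.cast_nonneg (α := ℝ)]) hη
  refine ⟨fun t ht => hsum.of_norm_bounded fun i => hbound i t ht,
    continuousOn_tsum hterm hsum fun i t ht => hbound i t ht, ABIntegral_self .., ?_⟩
  intro f x x0 _ hx
  simpa [ABIntegral_self] using hx t0 (left_mem_Icc.2 htT.le)

/-- The generalized AB integral is well defined, continuous and
vanishes at `t0`; consequently continuous solutions of the integral equation satisfy
the initial condition when `μ ≠ 1`. -/
theorem ab_integral_well_defined
    (t0 T θ μ γ b : ℝ) (htT : t0 < T) (hθ0 : 0 < θ) (hθ1 : θ < 1)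
    (hμ0 : 0 < μ) (hμ1 : μ < 1) (hγ : 0 < γ) (hb : 0 < b)
    (η : ℝ → ℝ) (hη : ContinuousOn η (Set.Icc t0 T)) :
    (∀ t ∈ Set.Icc t0 T, Summable (fun i : ℕ =>
      genBinom γ i * θ ^ i /
          (b * (1 - θ) ^ ((i : ℝ) - 1) * Real.Gamma ((i : ℝ) * θ + 1 - μ)) *
        ∫ s in t0..t, (t - s) ^ ((i : ℝ) * θ - μ) * η s)) ∧
    ContinuousOn (fun t => ABIntegral t0 b θ μ γ η t) (Set.Icc t0 T) ∧
    ABIntegral t0 b θ μ γ η t0 = 0 ∧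
    (∀ (f : ℝ → ℝ → ℝ) (x : ℝ → ℝ) (x0 : ℝ), ContinuousOn x (Set.Icc t0 T) →
      (∀ t ∈ Set.Icc t0 T, x t = x0 + ABIntegral t0 b θ μ γ (fun s => f s (x s)) t) →
      x t0 = x0) :=
  ab_integral_well_defined_general t0 T θ μ γ b htT hθ0 hθ1 hμ1 η hη
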